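/- Let K be a number field with ring of integers 𝓞_K, let a₁,a₂,a₃,a₄ ∈ 𝓞_K[t], let q_n ∈ 𝓞_K[t] be given by the recursion, and let l > 2 be a prime. Assume: (i) the ideal of 𝓞_K/l𝓞_K generated by the residues of the constant terms a₂(0) and a₄(0) is the whole ring 𝓞_K/l𝓞_K; (ii) the sequence q_n(0) mod l𝓞_K is not eventually zero; (iii) the sequence of residues q̄_n of q_n in 𝓞_K[t]/(l, t^l) is eventually periodic with least eventual period β (i.e. β ≥ 1 is minimal such that for some α, q̄_{n+β} = q̄_n for all n ≥ α). Then l divides β, and β/l is the least eventual period of the subsequence (q̄_{ml})_{m ≥ 0}. -/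

import Mathlib

noncomputable section

open Complex Real MeasureTheory

/-- The weight-`k` slash of `f` by `σ_{z₀}`, as a function on the unit disc. -/
def slashDisc (k : ℕ) (z₀ : ℂ) (f : ℂ → ℂ) (w : ℂ) : ℂ :=
  (2 * Complex.I * (z₀.im : ℂ)) ^ (k / 2) * (1 - w) ^ (-(k : ℤ)) *
    f ((z₀ - (starRingEnd ℂ) z₀ * w) / (1 - w))

/-- The `n`-th Fourier (normalized Taylor) coefficient of `f` at `z₀`, in weight `k`. -/
def fourierCoeffAt (k : ℕ) (z₀ : ℂ) (f : ℂ → ℂ) (n : ℕ) : ℂ :=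
  iteratedDeriv n (slashDisc k z₀ f) 0 / (n.factorial : ℂ)

/-- Holomorphic cusp form of weight `k` for `SL(2,ℤ)`. -/
def IsCuspForm (k : ℕ) (f : ℂ → ℂ) : Prop :=
  (∀ z : ℂ, 0 < z.im → DifferentiableAt ℂ f z) ∧
  (∀ γ : Matrix.SpecialLinearGroup (Fin 2) ℤ, ∀ z : ℂ, 0 < z.im →
      f ((((γ : Matrix (Fin 2) (Fin 2) ℤ) 0 0 : ℂ) * z + ((γ : Matrix (Fin 2) (Fin 2) ℤ) 0 1 : ℂ)) /
          (((γ : Matrix (Fin 2) (Fin 2) ℤ) 1 0 : ℂ) * z + ((γ : Matrix (Fin 2) (Fin 2) ℤ) 1 1 : ℂ)))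
        = (((γ : Matrix (Fin 2) (Fin 2) ℤ) 1 0 : ℂ) * z +
            ((γ : Matrix (Fin 2) (Fin 2) ℤ) 1 1 : ℂ)) ^ k * f z) ∧
  (∀ ε : ℝ, 0 < ε → ∃ Y : ℝ, ∀ x y : ℝ, Y < y → ‖f (x + y * Complex.I)‖ < ε)

/-- Ramanujan's Delta function. -/
def Delta (z : ℂ) : ℂ :=
  Complex.exp (2 * π * Complex.I * z) *
    ∏' n : ℕ, (1 - Complex.exp (2 * π * Complex.I * (n + 1) * z)) ^ 24

def E2star (z : ℂ) : ℂ :=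
  1 - 24 * ∑' n : ℕ, (ArithmeticFunction.sigma 1 (n + 1) : ℂ) *
      Complex.exp (2 * π * Complex.I * (n + 1) * z) - 3 / (π * z.im)

def E4 (z : ℂ) : ℂ :=
  1 + 240 * ∑' n : ℕ, (ArithmeticFunction.sigma 3 (n + 1) : ℂ) *
      Complex.exp (2 * π * Complex.I * (n + 1) * z)

def E6 (z : ℂ) : ℂ :=
  1 - 504 * ∑' n : ℕ, (ArithmeticFunction.sigma 5 (n + 1) : ℂ) *
      Complex.exp (2 * π * Complex.I * (n + 1) * z)

/-- The polynomials 𝓑ₙ ∈ ℤ[Q,R]; `X 0` is `Q = E₄`, `X 1` is `R = E₆`. -/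
def Bpoly : ℕ → MvPolynomial (Fin 2) ℤ
  | 0 => 1
  | 1 => 0
  | (n + 2) =>
      -4 * MvPolynomial.X 1 * MvPolynomial.pderiv 0 (Bpoly (n + 1))
        - 6 * MvPolynomial.X 0 ^ 2 * MvPolynomial.pderiv 1 (Bpoly (n + 1))
        - MvPolynomial.C (((n : ℤ) + 1) * ((n : ℤ) + 12)) * MvPolynomial.X 0 * Bpoly n

/-- The polynomials pₙ(t). -/
def ppoly : ℕ → Polynomial ℤ
  | 0 => 1
  | 1 => 0
  | (n + 2) =>
      Polynomial.C (-2 * ((n : ℤ) + 1)) * Polynomial.X * ppoly (n + 1)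
        + 6 * (Polynomial.X ^ 2 - 1) * Polynomial.derivative (ppoly (n + 1))
        - Polynomial.C (((n : ℤ) + 1) * ((n : ℤ) + 12)) * ppoly n

/-- The polynomials qₙ(t). -/
def qpoly : ℕ → Polynomial ℤ
  | 0 => 1
  | 1 => 0
  | (n + 2) =>
      Polynomial.C (-2 * ((n : ℤ) + 1)) * Polynomial.X ^ 2 * qpoly (n + 1)
        + 4 * (Polynomial.X ^ 3 - 1) * Polynomial.derivative (qpoly (n + 1))
        - Polynomial.C (((n : ℤ) + 1) * ((n : ℤ) + 12)) * Polynomial.X * qpoly n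

/-- The general recursion q₀ = 1, q₁ = a₁,
`q_{n+1} = (a₁ + n a₂) q_n + a₃ q_n' + n(n+11) a₄ q_{n-1}`. -/
def qrec {R : Type*} [CommRing R] (a₁ a₂ a₃ a₄ : Polynomial R) : ℕ → Polynomial R
  | 0 => 1
  | 1 => a₁
  | (n + 2) =>
      (a₁ + ((n : Polynomial R) + 1) * a₂) * qrec a₁ a₂ a₃ a₄ (n + 1)
        + a₃ * Polynomial.derivative (qrec a₁ a₂ a₃ a₄ (n + 1))
        + ((n : Polynomial R) + 1) * ((n : Polynomial R) + 12) * a₄ * qrec a₁ a₂ a₃ a₄ n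

/-- Maass raising operator of weight `w`. -/
def raise (w : ℤ) (g : ℂ → ℂ) : ℂ → ℂ := fun z =>
  1 / (2 * π * Complex.I) * deriv g z - (w : ℂ) / (4 * π * z.im) * g z

/-- `raiseIter k m = ∂_{k+2m-2} ∘ ⋯ ∘ ∂_{k+2} ∘ ∂_k`. -/
def raiseIter (k : ℕ) : ℕ → (ℂ → ℂ) → (ℂ → ℂ)
  | 0 => fun g => g
  | (m + 1) => fun g => raise ((k : ℤ) + 2 * m) (raiseIter k m g)

/-- Möbius action of `SL(2,ℤ)` on `ℂ`. -/
def moebius (γ : Matrix.SpecialLinearGroup (Fin 2) ℤ) (z : ℂ) : ℂ :=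
  (((γ : Matrix (Fin 2) (Fin 2) ℤ) 0 0 : ℂ) * z + ((γ : Matrix (Fin 2) (Fin 2) ℤ) 0 1 : ℂ)) /
    (((γ : Matrix (Fin 2) (Fin 2) ℤ) 1 0 : ℂ) * z + ((γ : Matrix (Fin 2) (Fin 2) ℤ) 1 1 : ℂ))

/-- Order of the stabilizer of `z₀` in `PSL(2,ℤ)`. -/
def stabOrder (z₀ : ℂ) : ℕ :=
  Set.ncard {γ : Matrix.SpecialLinearGroup (Fin 2) ℤ | moebius γ z₀ = z₀} / 2

/-- The CM point attached to a fundamental discriminant `D < 0`.  -/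
def cmPoint (D : ℤ) : ℂ :=
  if D % 2 = 0 then Complex.I * (Real.sqrt (|D| : ℝ) : ℂ) / 2
  else (1 + Complex.I * (Real.sqrt (|D| : ℝ) : ℂ)) / 2

/-- A term of the weight-12 elliptic Poincaré series attached to `z₀`. -/
def poincareTerm (z₀ : ℂ) (m : ℕ) (γ : Matrix.SpecialLinearGroup (Fin 2) ℤ) (z : ℂ) : ℂ :=
  (2 * Complex.I * (z₀.im : ℂ)) ^ 6 * (moebius γ z - z₀) ^ m /
    ((moebius γ z - (starRingEnd ℂ) z₀) ^ (m + 12) *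
      (((γ : Matrix (Fin 2) (Fin 2) ℤ) 1 0 : ℂ) * z + ((γ : Matrix (Fin 2) (Fin 2) ℤ) 1 1 : ℂ)) ^ 12)

/-- `𝓔_m(z)`. -/
def Ecal (m : ℕ) (z : ℂ) : ℂ :=
  ∑ r ∈ Finset.range (m + 1),
    ((m.factorial / r.factorial : ℕ) : ℂ) * (Nat.choose (m + 11) (r + 11) : ℂ) *
      E2star z ^ (m - r) * MvPolynomial.aeval ![E4 z, E6 z] (Bpoly r)

/-!
Let `I = (l, tˡ)`; it is stable under `d/dt` because `(tˡ)' = l t^(l-1)`. Subtracting the recursion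
at `n` from the one at `n + b` shows that an eventual period `b` forces
`b (a₂ q_{m+1} + (2m + b + 13) a₄ q_m) ∈ I` for large `m`. If `l ∤ β`, comparing this for the
periods `β` and `2β` gives `2β² a₄ q_m ∈ I`, hence `a₄ q_m ∈ I` and then `a₂ q_m ∈ I`; as `a₂(0)`
and `a₄(0)` are coprime modulo `l`, this makes `l ∣ q_m(0)` for all large `m`.

Conversely, if `l` divides both `N > 0` and `b`, every extra term of the same difference identity
lies in `I`, so the single congruence `q_{N+b} ≡ q_N` propagates to all `n ≥ N`. Thus an eventual
period `β'` of `(q̄_{ml})` yields the eventual period `lβ'` of `(q̄_n)`, and `β ≤ lβ'`.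
-/

open Polynomial Filter

theorem Filter.eventually_atTop_add_nat_iff {p : ℕ → Prop} (k : ℕ) :
    (∀ᶠ n in atTop, p (n + k)) ↔ ∀ᶠ n in atTop, p n :=
  ⟨fun h => map_add_atTop_eq_nat k ▸ eventually_map.2 h, (tendsto_add_atTop_nat k).eventually⟩

theorem Ideal.mem_of_isCoprime_of_mul_mem {S : Type*} [CommSemiring S] {J : Ideal S}
    {a b g : S} (hab : IsCoprime a b) (ha : a * g ∈ J) (hb : b * g ∈ J) : g ∈ J := by
  obtain ⟨u, v, huv⟩ := hab
  have hg : g = u * (a * g) + v * (b * g) := by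
    rw [← mul_assoc, ← mul_assoc, ← add_mul, huv, one_mul]
  exact hg ▸ J.add_mem (J.mul_mem_left u ha) (J.mul_mem_left v hb)

theorem Ideal.mem_of_natCast_mul_mem {S : Type*} [CommRing S] {J : Ideal S} {l c : ℕ}
    (hl : l.Prime) (hlJ : (l : S) ∈ J) (hc : ¬ l ∣ c) {g : S} (h : (c : S) * g ∈ J) :
    g ∈ J := by
  have hcl : IsCoprime (c : ℤ) l :=
    Nat.isCoprime_iff_coprime.2 (Nat.coprime_comm.1 ((hl.coprime_iff_not_dvd).2 hc))
  exact Ideal.mem_of_isCoprime_of_mul_mem (by exact_mod_cast hcl.intCast) h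
    (J.mul_mem_right g hlJ)

theorem Ideal.natCast_mul_mem_of_dvd {S : Type*} [CommSemiring S] {J : Ideal S} {l k : ℕ}
    (hlJ : (l : S) ∈ J) (hk : l ∣ k) (g : S) : (k : S) * g ∈ J := by
  obtain ⟨d, rfl⟩ := hk
  rw [Nat.cast_mul, mul_assoc]
  exact J.mul_mem_right _ hlJ

section SpanCXPow

variable {R : Type*} [CommRing R] (l : ℕ)

theorem natCast_mem_span_C_X_pow : (l : R[X]) ∈ Ideal.span {C (l : R), X ^ l} :=
  Ideal.subset_span (by simp)

theorem derivative_mem_span_C_X_pow {f : R[X]} (hf : f ∈ Ideal.span {C (l : R), X ^ l}) :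
    derivative f ∈ Ideal.span {C (l : R), X ^ l} := by
  rw [Ideal.mem_span_pair] at hf ⊢
  obtain ⟨a, b, rfl⟩ := hf
  exact ⟨derivative a + b * X ^ (l - 1), derivative b, by
    simp only [derivative_add, derivative_mul, derivative_C, derivative_X_pow]
    ring⟩

variable {l}

theorem dvd_coeff_zero_of_mem_span_C_X_pow (hl : l ≠ 0) {f : R[X]}
    (hf : f ∈ Ideal.span {C (l : R), X ^ l}) : (l : R) ∣ f.coeff 0 := by
  rw [Ideal.mem_span_pair] at hf
  obtain ⟨a, b, rfl⟩ := hf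
  simp only [coeff_add, mul_coeff_zero, coeff_C_zero, coeff_X_pow, Ne.symm hl, if_false,
    mul_zero, add_zero]
  exact dvd_mul_left _ _

theorem dvd_coeff_zero_of_mul_mem_span_C_X_pow (hl : l ≠ 0) {a b f : R[X]}
    (hab : IsCoprime (Ideal.Quotient.mk (Ideal.span {(l : R)}) (a.coeff 0))
      (Ideal.Quotient.mk (Ideal.span {(l : R)}) (b.coeff 0)))
    (ha : a * f ∈ Ideal.span {C (l : R), X ^ l}) (hb : b * f ∈ Ideal.span {C (l : R), X ^ l}) :
    (l : R) ∣ f.coeff 0 := by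
  have hmk : ∀ c : R[X], c * f ∈ Ideal.span {C (l : R), X ^ l} →
      Ideal.Quotient.mk _ (c.coeff 0) * Ideal.Quotient.mk _ (f.coeff 0) ∈
        (⊥ : Ideal (R ⧸ Ideal.span {(l : R)})) := fun c hc => by
    rw [← map_mul, ← mul_coeff_zero, Ideal.mem_bot, Ideal.Quotient.eq_zero_iff_dvd]
    exact dvd_coeff_zero_of_mem_span_C_X_pow hl hc
  rw [← Ideal.Quotient.eq_zero_iff_dvd, ← Ideal.mem_bot]
  exact Ideal.mem_of_isCoprime_of_mul_mem hab (hmk a ha) (hmk b hb)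

end SpanCXPow

def IsEventualPeriodMod {S : Type*} [CommRing S] (I : Ideal S) (u : ℕ → S) (b : ℕ) : Prop :=
  ∀ᶠ n in atTop, u (n + b) - u n ∈ I

theorem IsEventualPeriodMod.add {S : Type*} [CommRing S] {I : Ideal S} {u : ℕ → S} {b c : ℕ}
    (hb : IsEventualPeriodMod I u b) (hc : IsEventualPeriodMod I u c) :
    IsEventualPeriodMod I u (b + c) := by
  filter_upwards [hb, (eventually_atTop_add_nat_iff b).2 hc] with n hbn hcn
  rw [← add_assoc, ← sub_add_sub_cancel _ (u (n + b))]
  exact I.add_mem hcn hbn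

section Recursion

variable {R : Type*} [CommRing R] (a₁ a₂ a₃ a₄ : R[X])

local notation "q" => qrec a₁ a₂ a₃ a₄

theorem qrec_add_sub_qrec (m b : ℕ) :
    q (m + 2 + b) - q (m + 2) =
      (a₁ + ((m + 1 + b : ℕ) : R[X]) * a₂) * (q (m + 1 + b) - q (m + 1))
      + a₃ * derivative (q (m + 1 + b) - q (m + 1))
      + ((m + 1 + b : ℕ) : R[X]) * (((m + 12 + b : ℕ) : R[X]) * a₄ * (q (m + b) - q m))
      + (b : R[X]) * (a₂ * q (m + 1) + (2 * m + b + 13) * a₄ * q m) := by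
  rw [show m + 2 + b = m + b + 2 by ring, show m + 1 + b = m + b + 1 by ring, qrec, qrec,
    derivative_sub]
  push_cast
  ring

variable {a₁ a₂ a₃ a₄} {I : Ideal R[X]}

theorem IsEventualPeriodMod.eventually_period_relation_mem (hI : ∀ f ∈ I, derivative f ∈ I)
    {b : ℕ} (h : IsEventualPeriodMod I q b) :
    ∀ᶠ m in atTop, (b : R[X]) * (a₂ * q (m + 1) + (2 * m + b + 13) * a₄ * q m) ∈ I := by
  filter_upwards [h, (eventually_atTop_add_nat_iff 1).2 h, (eventually_atTop_add_nat_iff 2).2 h]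
    with m h₀ h₁ h₂
  rw [eq_sub_of_add_eq' (qrec_add_sub_qrec a₁ a₂ a₃ a₄ m b).symm]
  exact I.sub_mem h₂ (I.add_mem (I.add_mem (I.mul_mem_left _ h₁) (I.mul_mem_left _ (hI _ h₁)))
    (I.mul_mem_left _ (I.mul_mem_left _ h₀)))

theorem IsEventualPeriodMod.eventually_mul_qrec_mem_of_not_dvd {l : ℕ} (hl : l.Prime)
    (hl2 : 2 < l) (hlI : (l : R[X]) ∈ I) (hI : ∀ f ∈ I, derivative f ∈ I) {b : ℕ}
    (h : IsEventualPeriodMod I q b) (hlb : ¬ l ∣ b) :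
    ∀ᶠ m in atTop, a₂ * q m ∈ I ∧ a₄ * q m ∈ I := by
  have h₄ : ∀ᶠ m in atTop, a₄ * q m ∈ I := by
    filter_upwards [h.eventually_period_relation_mem hI,
      (h.add h).eventually_period_relation_mem hI] with m hb h2b
    have hl2b : ¬ l ∣ 2 * b ^ 2 := by
      rw [hl.dvd_mul, not_or]
      exact ⟨fun h2 => (Nat.le_of_dvd two_pos h2).not_gt hl2,
        fun hb2 => hlb (hl.dvd_of_dvd_pow hb2)⟩
    refine I.mem_of_natCast_mul_mem hl hlI hl2b ?_
    have e : ((2 * b ^ 2 : ℕ) : R[X]) * (a₄ * q m) =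
        ((b + b : ℕ) : R[X]) *
            (a₂ * q (m + 1) + (2 * m + ((b + b : ℕ) : R[X]) + 13) * a₄ * q m)
          - 2 * ((b : R[X]) * (a₂ * q (m + 1) + (2 * m + b + 13) * a₄ * q m)) := by
      push_cast; ring
    rw [e]
    exact I.sub_mem h2b (I.mul_mem_left 2 hb)
  have h₂ : ∀ᶠ m in atTop, a₂ * q (m + 1) ∈ I := by
    filter_upwards [h.eventually_period_relation_mem hI, h₄] with m hb h4
    refine I.mem_of_natCast_mul_mem hl hlI hlb ?_
    have e : (b : R[X]) * (a₂ * q (m + 1)) =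
        (b : R[X]) * (a₂ * q (m + 1) + (2 * m + b + 13) * a₄ * q m)
          - (b * (2 * m + b + 13)) * (a₄ * q m) := by
      ring
    rw [e]
    exact I.sub_mem hb (I.mul_mem_left _ h4)
  exact ((eventually_atTop_add_nat_iff 1).1 h₂).and h₄

theorem qrec_add_sub_qrec_mem_of_dvd {l : ℕ} (hlI : (l : R[X]) ∈ I)
    (hI : ∀ f ∈ I, derivative f ∈ I) {m b : ℕ} (hlb : l ∣ b)
    (h₁ : q (m + 1 + b) - q (m + 1) ∈ I)
    (h₀ : ((m + 1 + b : ℕ) : R[X]) *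
        (((m + 12 + b : ℕ) : R[X]) * a₄ * (q (m + b) - q m)) ∈ I) :
    q (m + 2 + b) - q (m + 2) ∈ I := by
  rw [qrec_add_sub_qrec]
  exact I.add_mem
    (I.add_mem (I.add_mem (I.mul_mem_left _ h₁) (I.mul_mem_left _ (hI _ h₁))) h₀)
    (I.natCast_mul_mem_of_dvd hlI hlb _)

theorem isEventualPeriodMod_qrec_of_sub_mem {l : ℕ} (hlI : (l : R[X]) ∈ I)
    (hI : ∀ f ∈ I, derivative f ∈ I) {N b : ℕ} (hN : l ∣ N) (hN0 : 0 < N) (hlb : l ∣ b)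
    (h : q (N + b) - q N ∈ I) : IsEventualPeriodMod I q b := by
  obtain ⟨n, rfl⟩ := Nat.exists_eq_add_one.2 hN0
  have key : ∀ k, n + 1 ≤ k → q (k + b) - q k ∈ I ∧ q (k + 1 + b) - q (k + 1) ∈ I := by
    intro k hk
    induction k, hk using Nat.le_induction with
    | base => exact ⟨h, qrec_add_sub_qrec_mem_of_dvd hlI hI hlb h
        (I.natCast_mul_mem_of_dvd hlI (dvd_add hN hlb) _)⟩
    | succ k _ ih => exact ⟨ih.2, qrec_add_sub_qrec_mem_of_dvd hlI hI hlb ih.2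
        (I.mul_mem_left _ (I.mul_mem_left _ ih.1))⟩
  exact eventually_atTop.2 ⟨n + 1, fun k hk => (key k hk).1⟩

end Recursion

theorem l_dvd_least_period_general (K : Type*) [Field K]
    (a₁ a₂ a₃ a₄ : Polynomial (NumberField.RingOfIntegers K))
    (l : ℕ) (hl : l.Prime) (hl2 : 2 < l)
    (hgen : Ideal.span
        ({Ideal.Quotient.mk (Ideal.span {(l : NumberField.RingOfIntegers K)}) (a₂.coeff 0),
          Ideal.Quotient.mk (Ideal.span {(l : NumberField.RingOfIntegers K)}) (a₄.coeff 0)}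
          : Set (NumberField.RingOfIntegers K ⧸
              Ideal.span {(l : NumberField.RingOfIntegers K)})) = ⊤)
    (hnz : ∀ N : ℕ, ∃ n : ℕ, N ≤ n ∧
      ¬ (l : NumberField.RingOfIntegers K) ∣ (qrec a₁ a₂ a₃ a₄ n).coeff 0)
    (β : ℕ)
    (hper : ∃ α : ℕ, ∀ n : ℕ, α ≤ n →
      qrec a₁ a₂ a₃ a₄ (n + β) - qrec a₁ a₂ a₃ a₄ n ∈
        Ideal.span ({Polynomial.C (l : NumberField.RingOfIntegers K), Polynomial.X ^ l}
          : Set (Polynomial (NumberField.RingOfIntegers K))))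
    (hleast : ∀ β' : ℕ, 1 ≤ β' →
      (∃ α : ℕ, ∀ n : ℕ, α ≤ n →
        qrec a₁ a₂ a₃ a₄ (n + β') - qrec a₁ a₂ a₃ a₄ n ∈
          Ideal.span ({Polynomial.C (l : NumberField.RingOfIntegers K), Polynomial.X ^ l}
            : Set (Polynomial (NumberField.RingOfIntegers K)))) → β ≤ β') :
    l ∣ β ∧
    (∃ α : ℕ, ∀ m : ℕ, α ≤ m →
      qrec a₁ a₂ a₃ a₄ ((m + β / l) * l) - qrec a₁ a₂ a₃ a₄ (m * l) ∈
        Ideal.span ({Polynomial.C (l : NumberField.RingOfIntegers K), Polynomial.X ^ l}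
          : Set (Polynomial (NumberField.RingOfIntegers K)))) ∧
    (∀ β' : ℕ, 1 ≤ β' →
      (∃ α : ℕ, ∀ m : ℕ, α ≤ m →
        qrec a₁ a₂ a₃ a₄ ((m + β') * l) - qrec a₁ a₂ a₃ a₄ (m * l) ∈
          Ideal.span ({Polynomial.C (l : NumberField.RingOfIntegers K), Polynomial.X ^ l}
            : Set (Polynomial (NumberField.RingOfIntegers K)))) → β / l ≤ β') := by
  have hI : ∀ f ∈ Ideal.span {C (l : NumberField.RingOfIntegers K), X ^ l},
      derivative f ∈ _ :=
    fun f => derivative_mem_span_C_X_pow l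
  have hlI := natCast_mem_span_C_X_pow (R := NumberField.RingOfIntegers K) l
  obtain ⟨α, hα⟩ := hper
  have hβ : IsEventualPeriodMod _ (qrec a₁ a₂ a₃ a₄) β := eventually_atTop.2 ⟨α, hα⟩
  have hdvd : l ∣ β := by
    by_contra hlβ
    obtain ⟨n, hn, h₂, h₄⟩ := ((frequently_atTop.2 hnz).and_eventually
      (hβ.eventually_mul_qrec_mem_of_not_dvd hl hl2 hlI hI hlβ)).exists
    exact hn (dvd_coeff_zero_of_mul_mem_span_C_X_pow hl.ne_zero
      (Ideal.mem_span_pair.1 (hgen ▸ Submodule.mem_top)) h₂ h₄)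
  refine ⟨hdvd, ⟨α, fun m hm => ?_⟩, fun β' hβ' ⟨α', hα'⟩ => ?_⟩
  · rw [add_mul, Nat.div_mul_cancel hdvd]
    exact hα _ (hm.trans (Nat.le_mul_of_pos_right m hl.pos))
  · have hsub := hα' (α' + 1) le_self_add
    rw [add_mul, mul_comm β' l] at hsub
    have hlβ' := isEventualPeriodMod_qrec_of_sub_mem hlI hI (dvd_mul_left l _)
      (Nat.mul_pos α'.succ_pos hl.pos) (dvd_mul_right l β') hsub
    exact Nat.div_le_of_le_mul
      (hleast (l * β') (Nat.mul_pos hl.pos hβ') (eventually_atTop.1 hlβ'))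

/-- Proposition 6.9 of the paper. -/
theorem l_dvd_least_period (K : Type*) [Field K] [NumberField K]
    (a₁ a₂ a₃ a₄ : Polynomial (NumberField.RingOfIntegers K))
    (l : ℕ) (hl : l.Prime) (hl2 : 2 < l)
    (hgen : Ideal.span
        ({Ideal.Quotient.mk (Ideal.span {(l : NumberField.RingOfIntegers K)}) (a₂.coeff 0),
          Ideal.Quotient.mk (Ideal.span {(l : NumberField.RingOfIntegers K)}) (a₄.coeff 0)}
          : Set (NumberField.RingOfIntegers K ⧸
              Ideal.span {(l : NumberField.RingOfIntegers K)})) = ⊤)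
    (hnz : ∀ N : ℕ, ∃ n : ℕ, N ≤ n ∧
      ¬ (l : NumberField.RingOfIntegers K) ∣ (qrec a₁ a₂ a₃ a₄ n).coeff 0)
    (β : ℕ) (hβ : 1 ≤ β)
    (hper : ∃ α : ℕ, ∀ n : ℕ, α ≤ n →
      qrec a₁ a₂ a₃ a₄ (n + β) - qrec a₁ a₂ a₃ a₄ n ∈
        Ideal.span ({Polynomial.C (l : NumberField.RingOfIntegers K), Polynomial.X ^ l}
          : Set (Polynomial (NumberField.RingOfIntegers K))))
    (hleast : ∀ β' : ℕ, 1 ≤ β' →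
      (∃ α : ℕ, ∀ n : ℕ, α ≤ n →
        qrec a₁ a₂ a₃ a₄ (n + β') - qrec a₁ a₂ a₃ a₄ n ∈
          Ideal.span ({Polynomial.C (l : NumberField.RingOfIntegers K), Polynomial.X ^ l}
            : Set (Polynomial (NumberField.RingOfIntegers K)))) → β ≤ β') :
    l ∣ β ∧
    (∃ α : ℕ, ∀ m : ℕ, α ≤ m →
      qrec a₁ a₂ a₃ a₄ ((m + β / l) * l) - qrec a₁ a₂ a₃ a₄ (m * l) ∈
        Ideal.span ({Polynomial.C (l : NumberField.RingOfIntegers K), Polynomial.X ^ l}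
          : Set (Polynomial (NumberField.RingOfIntegers K)))) ∧
    (∀ β' : ℕ, 1 ≤ β' →
      (∃ α : ℕ, ∀ m : ℕ, α ≤ m →
        qrec a₁ a₂ a₃ a₄ ((m + β') * l) - qrec a₁ a₂ a₃ a₄ (m * l) ∈
          Ideal.span ({Polynomial.C (l : NumberField.RingOfIntegers K), Polynomial.X ^ l}
            : Set (Polynomial (NumberField.RingOfIntegers K)))) → β / l ≤ β') :=
  l_dvd_least_period_general K a₁ a₂ a₃ a₄ l hl hl2 hgen hnz β hper hleast

end
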